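/- arXiv:2605.07813 — 2 statements merged into one kernel-verified Lean document; each statement's English description precedes it below -/
import Mathlib

section
/- Let (M^n, g) be a Riemannian manifold with a ξ-parallel (α,ξ)-connection ∇ = ∇^g - S, where S_X Y = α(g(Y,ξ)X - g(X,Y)ξ). Then the curvature tensors satisfy R_{XY}Z = R^g_{XY}Z + α²(g(X,Z)Y - g(Y,Z)X) + X(α)(g(Z,ξ)Y - g(Y,Z)ξ) - Y(α)(g(Z,ξ)X - g(X,Z)ξ), with the convention R_{XY}Z = ∇_{[X,Y]}Z - ∇_X∇_Y Z + ∇_Y∇_X Z. -/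
/-- Curvature formula for a `ξ`-parallel `(α,ξ)`-connection `∇ = ∇^g - S`:
`R_{XY}Z = R^g_{XY}Z + α²(g(X,Z)Y - g(Y,Z)X)
  + X(α)(g(Z,ξ)Y - g(Y,Z)ξ) - Y(α)(g(Z,ξ)X - g(X,Z)ξ)`,
with the convention `R_{XY}Z = ∇_{[X,Y]}Z - ∇_X∇_Y Z + ∇_Y∇_X Z`. -/
theorem stmt_10
    {F : Type*} [CommRing F] {Vf : Type*} [AddCommGroup Vf] [Module F Vf]
    (D : Vf → F → F)
    (hD_mul : ∀ (X : Vf) (f h : F), D X (f * h) = D X f * h + f * D X h)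
    (hD_addf : ∀ (X : Vf) (f h : F), D X (f + h) = D X f + D X h)
    (g : Vf → Vf → F)
    (hg_sym : ∀ X Y, g X Y = g Y X)
    (hg_smul : ∀ (c : F) (X Y : Vf), g (c • X) Y = c * g X Y)
    (hg_add : ∀ X X' Y : Vf, g (X + X') Y = g X Y + g X' Y)
    (covg : Vf → Vf → Vf)
    (hmetric : ∀ X Y Z, D X (g Y Z) = g (covg X Y) Z + g Y (covg X Z))
    (hLeib : ∀ (X : Vf) (f : F) (Y : Vf), covg X (f • Y) = D X f • Y + f • covg X Y)
    (hadd : ∀ X Y Z : Vf, covg X (Y + Z) = covg X Y + covg X Z)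
    (hten_smul : ∀ (f : F) (X Y : Vf), covg (f • X) Y = f • covg X Y)
    (hten_add : ∀ X X' Y : Vf, covg (X + X') Y = covg X Y + covg X' Y)
    (lie : Vf → Vf → Vf)
    (htorsionfree : ∀ X Y, covg X Y - covg Y X = lie X Y)
    (ξ : Vf) (hξ : g ξ ξ = 1) (α : F)
    (S : Vf → Vf → Vf)
    (hS : ∀ X Y, S X Y = α • (g Y ξ • X - g X Y • ξ))
    (cov : Vf → Vf → Vf)
    (hcov : ∀ X Y, cov X Y = covg X Y - S X Y)
    (hpar : ∀ X, cov X ξ = 0)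
    (R Rg : Vf → Vf → Vf → Vf)
    (hR : ∀ X Y Z, R X Y Z = cov (lie X Y) Z - cov X (cov Y Z) + cov Y (cov X Z))
    (hRg : ∀ X Y Z, Rg X Y Z = covg (lie X Y) Z - covg X (covg Y Z) + covg Y (covg X Z)) :
    ∀ X Y Z, R X Y Z
      = Rg X Y Z + (α * α) • (g X Z • Y - g Y Z • X)
        + D X α • (g Z ξ • Y - g Y Z • ξ)
        - D Y α • (g Z ξ • X - g X Z • ξ) := by
  intro X Y Z
  -- derivation helper lemmas
  have hD0 : ∀ W, D W (0 : F) = 0 := by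
    intro W
    have h := hD_addf W 0 0
    simp only [add_zero] at h
    exact (left_eq_add.mp h)
  have hDneg : ∀ W f, D W (-f) = - D W f := by
    intro W f
    have h := hD_addf W f (-f)
    simp only [add_neg_cancel, hD0] at h
    exact (neg_eq_of_add_eq_zero_right h.symm).symm
  have hDsub : ∀ W f h, D W (f - h) = D W f - D W h := by
    intro W f h
    rw [sub_eq_add_neg, hD_addf, hDneg, sub_eq_add_neg]
  -- covg helpers
  have hc0 : ∀ W, covg W 0 = 0 := by
    intro W
    have h := hadd W 0 0
    simp only [add_zero] at h
    exact (left_eq_add.mp h)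
  have hcneg : ∀ W U, covg W (-U) = - covg W U := by
    intro W U
    have h := hadd W U (-U)
    simp only [add_neg_cancel, hc0] at h
    exact (neg_eq_of_add_eq_zero_right h.symm).symm
  have hcsub : ∀ W U V, covg W (U - V) = covg W U - covg W V := by
    intro W U V
    rw [sub_eq_add_neg, hadd, hcneg, sub_eq_add_neg]
  have htneg : ∀ U W, covg (-U) W = - covg U W := by
    intro U W
    have := hten_smul (-1 : F) U W
    simpa using this
  have htsub : ∀ U V W, covg (U - V) W = covg U W - covg V W := by
    intro U V W
    rw [sub_eq_add_neg, hten_add, htneg, sub_eq_add_neg]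
  -- g helpers
  have hg01 : ∀ W, g 0 W = 0 := by
    intro W
    have := hg_smul 0 W W
    simpa using this
  have hg02 : ∀ W, g W 0 = 0 := by
    intro W; rw [hg_sym]; exact hg01 W
  have hg_smul2 : ∀ (c : F) (A B : Vf), g A (c • B) = c * g A B := by
    intro c A B; rw [hg_sym, hg_smul, hg_sym]
  have hg_add2 : ∀ A B B' : Vf, g A (B + B') = g A B + g A B' := by
    intro A B B'; rw [hg_sym, hg_add, hg_sym A B, hg_sym A B']
  have hg_neg2 : ∀ A B : Vf, g A (-B) = - g A B := by
    intro A B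
    have := hg_smul2 (-1) A B
    simpa using this
  have hg_sub2 : ∀ A B B' : Vf, g A (B - B') = g A B - g A B' := by
    intro A B B'; rw [sub_eq_add_neg, hg_add2, hg_neg2, sub_eq_add_neg]
  have hg_neg1 : ∀ A B : Vf, g (-A) B = - g A B := by
    intro A B; rw [hg_sym, hg_neg2, hg_sym]
  have hg_sub1 : ∀ A A' B : Vf, g (A - A') B = g A B - g A' B := by
    intro A A' B; rw [sub_eq_add_neg, hg_add, hg_neg1, sub_eq_add_neg]
  -- the key consequence of ξ-parallelism
  have hcξ : ∀ W, covg W ξ = α • W - (α * g W ξ) • ξ := by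
    intro W
    have h := hpar W
    rw [hcov, sub_eq_zero] at h
    rw [h, hS, hξ, one_smul, smul_sub, smul_smul]
  -- expand everything
  rw [hR, hRg, ← htorsionfree]
  simp only [hcov, hS, hcsub, hadd, htsub, hten_add, hten_smul, hLeib, hcξ,
    hmetric, hDsub, hD_mul, hD_addf, hg_sub1, hg_sub2, hg_add, hg_add2,
    hg_smul, hg_smul2, hg01, hg02, hξ, hcneg, hDneg, hg_neg1, hg_neg2,
    smul_sub, smul_add, smul_smul, hD0, mul_one, one_smul]
  rw [hg_sym Z X, hg_sym Z Y, hg_sym Y X]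
  match_scalars <;> ring
end

section
/- Let (M^n, g) be a Riemannian manifold with a ξ-parallel (α,ξ)-connection ∇. Then the Ricci tensors satisfy Ric(X,Y) = Ric^g(X,Y) + ((n-1)α² + ξ(α)) g(X,Y) + (n-2) X(α) g(Y,ξ), and the scalar curvatures satisfy κ = κ^g + n(n-1)α² + 2(n-1)ξ(α). -/
/-!
Since `∇ξ = 0` and `∇ = ∇^g - S`, the Levi-Civita derivative of `ξ` is forced to be
`∇^g_W ξ = α (W - g(W,ξ) ξ)`. Substituting `∇ = ∇^g - S` into `R` and eliminating every
derivative of `ξ` this way (together with metricity and torsion-freeness of `∇^g`) leaves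
`R_{UX}Y - R^g_{UX}Y` as a combination of `X`, `U` and `ξ` whose coefficients involve only `α`,
its derivatives and `g`. Contracting over an orthonormal frame, with `∑ g(X,eᵢ) L(eᵢ) = L(X)`
for linear `L`, gives the Ricci identity, and contracting once more gives the scalar one.
-/

open Finset

theorem sum_orthonormal_self {F V : Type*} [AddCommMonoidWithOne F] {n : ℕ} {g : V → V → F}
    {e : Fin n → V} (horth : ∀ i j, g (e i) (e j) = if i = j then 1 else 0) :
    ∑ i, g (e i) (e i) = n := by
  simp [horth]

theorem sub_apply_of_add {A B : Type*} [AddGroup A] [AddGroup B] {f : A → B}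
    (h : ∀ x y, f (x + y) = f x + f y) (x y : A) : f (x - y) = f x - f y :=
  map_sub (AddMonoidHom.mk' f h) x y

section

variable {F : Type*} [CommRing F] {V : Type*} [AddCommGroup V] [Module F V]

def curvature (cov lie : V → V → V) (X Y Z : V) : V :=
  cov (lie X Y) Z - cov X (cov Y Z) + cov Y (cov X Z)

theorem covg_xi_of_parallel {g : V → V → F} {covg S cov : V → V → V}
    {ξ : V} {α : F} (hξ : g ξ ξ = 1) (hS : ∀ X Y, S X Y = α • (g Y ξ • X - g X Y • ξ))
    (hcov : ∀ X Y, cov X Y = covg X Y - S X Y) (hpar : ∀ X, cov X ξ = 0) (W : V) :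
    covg W ξ = α • W - (α * g W ξ) • ξ := by
  rw [sub_eq_zero.mp ((hcov W ξ).symm.trans (hpar W)), hS, hξ]
  module

theorem curvature_eq_curvature_add {D : V → F → F} {g : V → V → F} {covg S cov lie : V → V → V}
    {ξ : V} {α : F}
    (hD_mul : ∀ (X : V) (f h : F), D X (f * h) = D X f * h + f * D X h)
    (hg_sym : ∀ X Y, g X Y = g Y X)
    (hg_smul : ∀ (c : F) (X Y : V), g (c • X) Y = c * g X Y)
    (hg_add : ∀ X X' Y : V, g (X + X') Y = g X Y + g X' Y)
    (hmetric : ∀ X Y Z, D X (g Y Z) = g (covg X Y) Z + g Y (covg X Z))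
    (hLeib : ∀ (X : V) (f : F) (Y : V), covg X (f • Y) = D X f • Y + f • covg X Y)
    (hadd : ∀ X Y Z : V, covg X (Y + Z) = covg X Y + covg X Z)
    (hten_add : ∀ X X' Y : V, covg (X + X') Y = covg X Y + covg X' Y)
    (htorsionfree : ∀ X Y, covg X Y - covg Y X = lie X Y)
    (hξ : g ξ ξ = 1) (hS : ∀ X Y, S X Y = α • (g Y ξ • X - g X Y • ξ))
    (hcov : ∀ X Y, cov X Y = covg X Y - S X Y) (hpar : ∀ X, cov X ξ = 0) (U X Y : V) :
    curvature cov lie U X Y = curvature covg lie U X Y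
      + (D U α * g Y ξ + α * α * g U Y) • X
      - (D X α * g Y ξ + α * α * g X Y) • U
      + (D X α * g U Y - D U α * g X Y) • ξ := by
  have hgsub : ∀ X Y Z, g (X - Y) Z = g X Z - g Y Z := fun X Y Z =>
    sub_apply_of_add (f := (g · Z)) (hg_add · · Z) X Y
  have hg_add' : ∀ X Y Z, g X (Y + Z) = g X Y + g X Z := fun X Y Z => by
    rw [hg_sym, hg_add, hg_sym Y, hg_sym Z]
  have hgsub' : ∀ X Y Z, g X (Y - Z) = g X Y - g X Z := fun X Y Z => by
    rw [hg_sym, hgsub, hg_sym Y, hg_sym Z]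
  have hg_smul' : ∀ (c : F) X Y, g X (c • Y) = c * g X Y := fun c X Y => by
    rw [hg_sym, hg_smul, hg_sym]
  have hcsub : ∀ X Y Z, covg X (Y - Z) = covg X Y - covg X Z := fun X =>
    sub_apply_of_add (hadd X)
  have htsub : ∀ X Y Z, covg (X - Y) Z = covg X Z - covg Y Z := fun X Y Z =>
    sub_apply_of_add (f := (covg · Z)) (hten_add · · Z) X Y
  have hcovξ := covg_xi_of_parallel hξ hS hcov hpar
  have hcov' : ∀ A B, cov A B = covg A B - (α * g B ξ) • A + (α * g A B) • ξ := fun A B => by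
    rw [hcov, hS]; module
  simp only [curvature, hcov', ← htorsionfree]
  simp only [hadd, hcsub, htsub, hLeib, hcovξ, hD_mul, hmetric,
      hg_add, hg_smul, hg_add', hg_smul', hgsub, hgsub', hξ]
  simp only [hg_sym]
  module

variable {n : ℕ} {g : V → V → F} {e : Fin n → V}

theorem sum_frame_mul (hframe : ∀ X : V, X = ∑ i, g X (e i) • e i) {L : V → F}
    (hL : IsLinearMap F L) (X : V) : ∑ i, g X (e i) * L (e i) = L X := by
  change _ = hL.mk' L X
  conv_rhs => rw [hframe X]
  simp only [map_sum, map_smul, IsLinearMap.mk'_apply, smul_eq_mul]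

theorem sum_curvature_frame_of_eq {D : V → F → F} {R Rg : V → V → V → V} {ξ : V} {α : F}
    (hD_smulX : ∀ (c : F) (X : V) (f : F), D (c • X) f = c * D X f)
    (hD_addX : ∀ (X Y : V) (f : F), D (X + Y) f = D X f + D Y f)
    (hg_sym : ∀ X Y, g X Y = g Y X)
    (hg_smul : ∀ (c : F) (X Y : V), g (c • X) Y = c * g X Y)
    (hg_add : ∀ X X' Y : V, g (X + X') Y = g X Y + g X' Y)
    (horth : ∀ i j, g (e i) (e j) = if i = j then 1 else 0)
    (hframe : ∀ X : V, X = ∑ i, g X (e i) • e i)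
    (hR : ∀ U X Y, R U X Y = Rg U X Y
      + (D U α * g Y ξ + α * α * g U Y) • X
      - (D X α * g Y ξ + α * α * g X Y) • U
      + (D X α * g U Y - D U α * g X Y) • ξ) (X Y : V) :
    ∑ i, g (R (e i) X Y) (e i) = ∑ i, g (Rg (e i) X Y) (e i)
      - ((((n : F) - 1) * (α * α) + D ξ α) * g X Y + ((n : F) - 2) * D X α * g Y ξ) := by
  have hgsub : ∀ X Y Z, g (X - Y) Z = g X Z - g Y Z := fun X Y Z =>
    sub_apply_of_add (f := (g · Z)) (hg_add · · Z) X Y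
  have hDα : IsLinearMap F (D · α) := ⟨(hD_addX · · α), (hD_smulX · · α)⟩
  have hgY : IsLinearMap F (g · Y) := ⟨(hg_add · · Y), (hg_smul · · Y)⟩
  have expand : ∀ i, g (R (e i) X Y) (e i) = g (Rg (e i) X Y) (e i)
      + g Y ξ * (g X (e i) * D (e i) α) + α * α * (g X (e i) * g (e i) Y)
      - (D X α * g Y ξ + α * α * g X Y) * g (e i) (e i)
      + D X α * (g ξ (e i) * g (e i) Y) - g X Y * (g ξ (e i) * D (e i) α) := fun i => by
    rw [hR]
    simp only [hg_add, hgsub, hg_smul, hg_sym X (e i)]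
    ring
  rw [sum_congr rfl fun i _ => expand i]
  simp only [sum_add_distrib, sum_sub_distrib, ← mul_sum]
  rw [sum_frame_mul hframe hDα, sum_frame_mul hframe hDα, sum_frame_mul hframe hgY,
    sum_frame_mul hframe hgY, sum_orthonormal_self horth, hg_sym ξ Y]
  ring

theorem sum_ricci_frame_of_eq {D : V → F → F} {Ric Ricg : V → V → F} {ξ : V} {α a b : F}
    (hD_smulX : ∀ (c : F) (X : V) (f : F), D (c • X) f = c * D X f)
    (hD_addX : ∀ (X Y : V) (f : F), D (X + Y) f = D X f + D Y f)
    (hg_sym : ∀ X Y, g X Y = g Y X)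
    (horth : ∀ i j, g (e i) (e j) = if i = j then 1 else 0)
    (hframe : ∀ X : V, X = ∑ i, g X (e i) • e i)
    (hRic : ∀ X Y, Ric X Y = Ricg X Y + a * g X Y + b * D X α * g Y ξ) :
    ∑ i, Ric (e i) (e i) = ∑ i, Ricg (e i) (e i) + n * a + b * D ξ α := by
  simp only [hRic, sum_add_distrib, ← mul_sum, mul_assoc, hg_sym (e _) ξ, mul_comm (D _ α)]
  rw [sum_orthonormal_self horth,
    sum_frame_mul hframe (L := (D · α)) ⟨(hD_addX · · α), (hD_smulX · · α)⟩]
  ring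

end

theorem stmt_11_general
    {F : Type*} [CommRing F] {Vf : Type*} [AddCommGroup Vf] [Module F Vf]
    (n : ℕ)
    (D : Vf → F → F)
    (hD_mul : ∀ (X : Vf) (f h : F), D X (f * h) = D X f * h + f * D X h)
    (hD_smulX : ∀ (c : F) (X : Vf) (f : F), D (c • X) f = c * D X f)
    (hD_addX : ∀ (X Y : Vf) (f : F), D (X + Y) f = D X f + D Y f)
    (g : Vf → Vf → F)
    (hg_sym : ∀ X Y, g X Y = g Y X)
    (hg_smul : ∀ (c : F) (X Y : Vf), g (c • X) Y = c * g X Y)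
    (hg_add : ∀ X X' Y : Vf, g (X + X') Y = g X Y + g X' Y)
    (covg : Vf → Vf → Vf)
    (hmetric : ∀ X Y Z, D X (g Y Z) = g (covg X Y) Z + g Y (covg X Z))
    (hLeib : ∀ (X : Vf) (f : F) (Y : Vf), covg X (f • Y) = D X f • Y + f • covg X Y)
    (hadd : ∀ X Y Z : Vf, covg X (Y + Z) = covg X Y + covg X Z)
    (hten_add : ∀ X X' Y : Vf, covg (X + X') Y = covg X Y + covg X' Y)
    (lie : Vf → Vf → Vf)
    (htorsionfree : ∀ X Y, covg X Y - covg Y X = lie X Y)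
    (ξ : Vf) (hξ : g ξ ξ = 1) (α : F)
    (S : Vf → Vf → Vf)
    (hS : ∀ X Y, S X Y = α • (g Y ξ • X - g X Y • ξ))
    (cov : Vf → Vf → Vf)
    (hcov : ∀ X Y, cov X Y = covg X Y - S X Y)
    (hpar : ∀ X, cov X ξ = 0)
    -- a global orthonormal frame
    (e : Fin n → Vf)
    (horth : ∀ i j, g (e i) (e j) = if i = j then 1 else 0)
    (hframe : ∀ X : Vf, X = ∑ i, g X (e i) • e i)
    (R Rg : Vf → Vf → Vf → Vf)
    (hR : ∀ X Y Z, R X Y Z = cov (lie X Y) Z - cov X (cov Y Z) + cov Y (cov X Z))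
    (hRg : ∀ X Y Z, Rg X Y Z = covg (lie X Y) Z - covg X (covg Y Z) + covg Y (covg X Z))
    (Ric Ricg : Vf → Vf → F) (κ κg : F)
    (hRic : ∀ X Y, Ric X Y = -∑ i, g (R (e i) X Y) (e i))
    (hRicg : ∀ X Y, Ricg X Y = -∑ i, g (Rg (e i) X Y) (e i))
    (hκ : κ = ∑ i, Ric (e i) (e i))
    (hκg : κg = ∑ i, Ricg (e i) (e i)) :
    (∀ X Y, Ric X Y
        = Ricg X Y + (((n : F) - 1) * (α * α) + D ξ α) * g X Y
          + ((n : F) - 2) * D X α * g Y ξ) ∧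
    κ = κg + (n : F) * ((n : F) - 1) * (α * α) + 2 * ((n : F) - 1) * D ξ α := by
  have hcurv : ∀ U X Y, R U X Y = Rg U X Y
      + (D U α * g Y ξ + α * α * g U Y) • X
      - (D X α * g Y ξ + α * α * g X Y) • U
      + (D X α * g U Y - D U α * g X Y) • ξ := fun U X Y => by
    rw [hR, hRg]
    exact curvature_eq_curvature_add hD_mul hg_sym hg_smul hg_add hmetric hLeib hadd hten_add
      htorsionfree hξ hS hcov hpar U X Y
  have hric : ∀ X Y, Ric X Y = Ricg X Y + (((n : F) - 1) * (α * α) + D ξ α) * g X Y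
      + ((n : F) - 2) * D X α * g Y ξ := fun X Y => by
    rw [hRic, hRicg, sum_curvature_frame_of_eq hD_smulX hD_addX hg_sym hg_smul hg_add horth hframe
      hcurv]
    ring
  refine ⟨hric, ?_⟩
  rw [hκ, hκg, sum_ricci_frame_of_eq hD_smulX hD_addX hg_sym horth hframe hric]
  ring

/-- Ricci and scalar curvature of a `ξ`-parallel `(α,ξ)`-connection:
`Ric(X,Y) = Ric^g(X,Y) + ((n-1)α² + ξ(α)) g(X,Y) + (n-2) X(α) g(Y,ξ)` and
`κ = κ^g + n(n-1)α² + 2(n-1) ξ(α)`, with the conventions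
`R_{XY}Z = ∇_{[X,Y]}Z - ∇_X∇_Y Z + ∇_Y∇_X Z`,
`Ric(X,Y) = -∑ᵢ g(R_{eᵢX}Y, eᵢ)` for an orthonormal frame `{eᵢ}`, and
`κ = ∑ᵢ Ric(eᵢ,eᵢ)`. -/
theorem stmt_11
    {F : Type*} [CommRing F] {Vf : Type*} [AddCommGroup Vf] [Module F Vf]
    (n : ℕ)
    (D : Vf → F → F)
    (hD_mul : ∀ (X : Vf) (f h : F), D X (f * h) = D X f * h + f * D X h)
    (hD_addf : ∀ (X : Vf) (f h : F), D X (f + h) = D X f + D X h)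
    (hD_smulX : ∀ (c : F) (X : Vf) (f : F), D (c • X) f = c * D X f)
    (hD_addX : ∀ (X Y : Vf) (f : F), D (X + Y) f = D X f + D Y f)
    (g : Vf → Vf → F)
    (hg_sym : ∀ X Y, g X Y = g Y X)
    (hg_smul : ∀ (c : F) (X Y : Vf), g (c • X) Y = c * g X Y)
    (hg_add : ∀ X X' Y : Vf, g (X + X') Y = g X Y + g X' Y)
    (covg : Vf → Vf → Vf)
    (hmetric : ∀ X Y Z, D X (g Y Z) = g (covg X Y) Z + g Y (covg X Z))
    (hLeib : ∀ (X : Vf) (f : F) (Y : Vf), covg X (f • Y) = D X f • Y + f • covg X Y)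
    (hadd : ∀ X Y Z : Vf, covg X (Y + Z) = covg X Y + covg X Z)
    (hten_smul : ∀ (f : F) (X Y : Vf), covg (f • X) Y = f • covg X Y)
    (hten_add : ∀ X X' Y : Vf, covg (X + X') Y = covg X Y + covg X' Y)
    (lie : Vf → Vf → Vf)
    (htorsionfree : ∀ X Y, covg X Y - covg Y X = lie X Y)
    (ξ : Vf) (hξ : g ξ ξ = 1) (α : F)
    (S : Vf → Vf → Vf)
    (hS : ∀ X Y, S X Y = α • (g Y ξ • X - g X Y • ξ))
    (cov : Vf → Vf → Vf)
    (hcov : ∀ X Y, cov X Y = covg X Y - S X Y)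
    (hpar : ∀ X, cov X ξ = 0)
    -- a global orthonormal frame
    (e : Fin n → Vf)
    (horth : ∀ i j, g (e i) (e j) = if i = j then 1 else 0)
    (hframe : ∀ X : Vf, X = ∑ i, g X (e i) • e i)
    (R Rg : Vf → Vf → Vf → Vf)
    (hR : ∀ X Y Z, R X Y Z = cov (lie X Y) Z - cov X (cov Y Z) + cov Y (cov X Z))
    (hRg : ∀ X Y Z, Rg X Y Z = covg (lie X Y) Z - covg X (covg Y Z) + covg Y (covg X Z))
    (Ric Ricg : Vf → Vf → F) (κ κg : F)
    (hRic : ∀ X Y, Ric X Y = -∑ i, g (R (e i) X Y) (e i))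
    (hRicg : ∀ X Y, Ricg X Y = -∑ i, g (Rg (e i) X Y) (e i))
    (hκ : κ = ∑ i, Ric (e i) (e i))
    (hκg : κg = ∑ i, Ricg (e i) (e i)) :
    (∀ X Y, Ric X Y
        = Ricg X Y + (((n : F) - 1) * (α * α) + D ξ α) * g X Y
          + ((n : F) - 2) * D X α * g Y ξ) ∧
    κ = κg + (n : F) * ((n : F) - 1) * (α * α) + 2 * ((n : F) - 1) * D ξ α :=
  stmt_11_general n D hD_mul hD_smulX hD_addX g hg_sym hg_smul hg_add covg hmetric hLeib hadd
    hten_add lie htorsionfree ξ hξ α S hS cov hcov hpar e horth hframe R Rg hR hRg Ric Ricg κ κg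
    hRic hRicg hκ hκg
end
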